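/- arXiv:math/0504262 — 7 statements merged into one kernel-verified Lean document; each statement's English description precedes it below -/
import Mathlib

section
/- Let n ≥ 1 and let U be a finite set of diagonal-normalizing partial isometries in Mₙ(ℂ) that is simultaneously a graphing and a treeing. Then ∑_{u ∈ U} rank u = n − 1; equivalently, the τ-cost of U equals 1 − 1/n. -/
open Matrix

/-- A diagonal-normalizing partial isometry in `Mₙ(ℂ)`: a partial isometry `u`
such that `u d uᴴ` and `uᴴ d u` are diagonal for every diagonal matrix `d`. -/
def IsDNPI {n : ℕ} (u : Matrix (Fin n) (Fin n) ℂ) : Prop :=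
  u * uᴴ * u = u ∧
    ∀ d : Matrix (Fin n) (Fin n) ℂ, d.IsDiag → (u * d * uᴴ).IsDiag ∧ (uᴴ * d * u).IsDiag

/-- A set `U` of matrices is a graphing if the star-subalgebra of `Mₙ(ℂ)` generated by the
diagonal matrices together with `U` is all of `Mₙ(ℂ)`. -/
def IsGraphing {n : ℕ} (U : Set (Matrix (Fin n) (Fin n) ℂ)) : Prop :=
  StarAlgebra.adjoin ℂ ({d : Matrix (Fin n) (Fin n) ℂ | d.IsDiag} ∪ U) = ⊤

/-- The evaluation of a word: each letter is a matrix together with a Boolean indicating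
whether the letter is the matrix itself (`true`) or its conjugate-transpose (`false`). -/
noncomputable def wordEval {n : ℕ} (w : List (Matrix (Fin n) (Fin n) ℂ × Bool)) :
    Matrix (Fin n) (Fin n) ℂ :=
  (w.map fun p => if p.2 then p.1 else p.1ᴴ).prod

/-- A formally reduced word in `U`: a nonempty sequence of letters `(uᵢ, εᵢ)` with `uᵢ ∈ U`,
such that no letter is immediately followed by the same matrix with the opposite exponent. -/
def IsReducedWord {n : ℕ} (U : Set (Matrix (Fin n) (Fin n) ℂ))
    (w : List (Matrix (Fin n) (Fin n) ℂ × Bool)) : Prop :=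
  w ≠ [] ∧ (∀ p ∈ w, p.1 ∈ U) ∧
    List.Chain' (fun a b => ¬(b.1 = a.1 ∧ b.2 ≠ a.2)) w

/-- `U` is a treeing if the evaluation of every formally reduced word in `U` has all diagonal
entries equal to `0`. -/
def IsTreeing {n : ℕ} (U : Set (Matrix (Fin n) (Fin n) ℂ)) : Prop :=
  ∀ w, IsReducedWord U w → ∀ i, wordEval w i i = 0

namespace DNPIaux

variable {n : ℕ} {u : Matrix (Fin n) (Fin n) ℂ}

/-- Each column of a diagonal-normalizing partial isometry has at most one nonzero entry. -/
lemma col_unique (hu : IsDNPI u) {a b i : Fin n} (ha : u a i ≠ 0) (hb : u b i ≠ 0) : a = b := by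
  by_contra hab
  have hd : (u * diagonal (Pi.single i (1:ℂ)) * uᴴ).IsDiag :=
    (hu.2 _ (isDiag_diagonal _)).1
  have := hd hab
  dsimp only at this
  rw [Matrix.mul_apply] at this
  simp only [Matrix.mul_diagonal, conjTranspose_apply] at this
  rw [Finset.sum_eq_single i] at this
  · simp only [Pi.single_eq_same, mul_one] at this
    exact ha (by
      rcases mul_eq_zero.1 this with h | h
      · exact h
      · exact absurd (by simpa using h) hb)
  · intro c _ hc; simp [Pi.single_eq_of_ne hc]
  · simp

/-- Each row of a diagonal-normalizing partial isometry has at most one nonzero entry. -/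
lemma row_unique (hu : IsDNPI u) {a i j : Fin n} (hi : u a i ≠ 0) (hj : u a j ≠ 0) : i = j := by
  by_contra hij
  have hd : (uᴴ * diagonal (Pi.single a (1:ℂ)) * u).IsDiag :=
    (hu.2 _ (isDiag_diagonal _)).2
  have := hd hij
  dsimp only at this
  rw [Matrix.mul_apply] at this
  simp only [Matrix.mul_diagonal, conjTranspose_apply] at this
  rw [Finset.sum_eq_single a] at this
  · simp only [Pi.single_eq_same, mul_one] at this
    rcases mul_eq_zero.1 this with h | h
    · exact hi (by simpa using h)
    · exact hj h
  · intro c _ hc; simp [Pi.single_eq_of_ne hc]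
  · simp

open scoped Classical in
/-- The set of nonzero columns of a matrix. -/
noncomputable def colSupp (u : Matrix (Fin n) (Fin n) ℂ) : Finset (Fin n) :=
  Finset.univ.filter (fun i => ∃ a, u a i ≠ 0)

lemma mem_colSupp_iff {i : Fin n} : i ∈ colSupp u ↔ ∃ a, u a i ≠ 0 := by
  classical
  rw [colSupp]
  simp

open scoped ComplexOrder in
/-- The rank of a diagonal-normalizing partial isometry is its number of nonzero columns. -/
lemma rank_eq_card_cols (hu : IsDNPI u) : u.rank = (colSupp u).card := by
  classical
  have hdiag : (uᴴ * u).IsDiag := by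
    have := (hu.2 1 Matrix.isDiag_one).2
    rwa [mul_one] at this
  have h1 : u.rank = (diagonal (uᴴ * u).diag).rank := by
    rw [hdiag.diagonal_diag, Matrix.rank_conjTranspose_mul_self]
  rw [h1, Matrix.rank_diagonal, Fintype.card_subtype]
  have : ∀ i : Fin n, ((uᴴ * u).diag i ≠ 0) ↔ i ∈ colSupp u := by
    intro i
    rw [mem_colSupp_iff]
    simp only [Matrix.diag_apply, Matrix.mul_apply, conjTranspose_apply]
    constructor
    · intro h
      by_contra hc
      push_neg at hc
      exact h (by simp [hc])
    · rintro ⟨a, ha⟩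
      simp only [Complex.star_def, ← Complex.normSq_eq_conj_mul_self, ← Complex.ofReal_sum,
        ne_eq, Complex.ofReal_eq_zero]
      have hpos : 0 < ∑ c, Complex.normSq (u c i) :=
        Finset.sum_pos' (fun c _ => Complex.normSq_nonneg _)
          ⟨a, Finset.mem_univ a, by simpa [Complex.normSq_pos] using ha⟩
      exact ne_of_gt hpos
  congr 1
  ext i
  simp only [Finset.mem_filter, Finset.mem_univ, true_and]
  rw [this i]

/-- The letter associated to a pair. -/
noncomputable def ltr {n : ℕ} (p : Matrix (Fin n) (Fin n) ℂ × Bool) :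
    Matrix (Fin n) (Fin n) ℂ :=
  if p.2 then p.1 else p.1ᴴ

lemma wordEval_eq {n : ℕ} (w : List (Matrix (Fin n) (Fin n) ℂ × Bool)) :
    wordEval w = (w.map ltr).prod := rfl

variable {p q : Matrix (Fin n) (Fin n) ℂ × Bool}

lemma ltr_col (hu : IsDNPI p.1) {a b i : Fin n} (ha : ltr p a i ≠ 0) (hb : ltr p b i ≠ 0) :
    a = b := by
  rcases p with ⟨u, _ | _⟩ <;> simp only [ltr, if_true, if_false, conjTranspose_apply,
    ne_eq, starRingEnd_apply, star_eq_zero] at ha hb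
  · exact row_unique hu (by simpa using ha) (by simpa using hb)
  · exact col_unique hu ha hb

lemma ltr_row (hu : IsDNPI p.1) {a i j : Fin n} (hi : ltr p a i ≠ 0) (hj : ltr p a j ≠ 0) :
    i = j := by
  rcases p with ⟨u, _ | _⟩ <;> simp only [ltr, if_true, if_false, conjTranspose_apply,
    ne_eq, starRingEnd_apply, star_eq_zero] at hi hj
  · exact col_unique hu (by simpa using hi) (by simpa using hj)
  · exact row_unique hu hi hj

lemma ltr_flip {a b : Fin n} : ltr (p.1, !p.2) a b = star (ltr p b a) := by
  rcases p with ⟨u, _ | _⟩ <;> simp [ltr, conjTranspose_apply]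

variable {U : Finset (Matrix (Fin n) (Fin n) ℂ)}

/-- For a treeing, single letters vanish on the diagonal: no loops. -/
lemma ltr_diag_zero (ht : IsTreeing (U : Set (Matrix (Fin n) (Fin n) ℂ)))
    (hp : p.1 ∈ U) (a : Fin n) : ltr p a a = 0 := by
  have hred : IsReducedWord (U : Set (Matrix (Fin n) (Fin n) ℂ)) [p] :=
    ⟨by simp, by simpa using hp, List.isChain_singleton _⟩
  have := ht [p] hred a
  simpa [wordEval_eq, ltr] using this

/-- For a treeing, the label of a directed edge is unique. -/
lemma label_unique (hU : ∀ u ∈ U, IsDNPI u) (ht : IsTreeing (U : Set (Matrix (Fin n) (Fin n) ℂ)))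
    {a b : Fin n} (hp : p.1 ∈ U) (hq : q.1 ∈ U)
    (hpl : ltr p b a ≠ 0) (hql : ltr q b a ≠ 0) : p = q := by
  by_contra hpq
  have hred : IsReducedWord (U : Set (Matrix (Fin n) (Fin n) ℂ)) [p, (q.1, !q.2)] := by
    refine ⟨by simp, ?_, ?_⟩
    · intro r hr
      rcases List.mem_pair.1 hr with h | h <;> subst h
      · simpa using hp
      · simpa using hq
    · unfold List.Chain'
      rw [List.isChain_pair]
      rintro ⟨h1, h2⟩
      apply hpq
      have : p.2 = q.2 := by
        rcases Bool.eq_false_or_eq_true q.2 with h | h <;>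
          rcases Bool.eq_false_or_eq_true p.2 with h' | h' <;> simp_all
      exact Prod.ext h1.symm this
  have hz := ht _ hred b
  rw [wordEval_eq] at hz
  simp only [List.map_cons, List.map_nil, List.prod_cons, List.prod_nil, mul_one] at hz
  rw [Matrix.mul_apply] at hz
  rw [Finset.sum_eq_single a] at hz
  · rw [ltr_flip] at hz
    rcases mul_eq_zero.1 hz with h | h
    · exact hpl h
    · exact hql (by simpa using h)
  · intro c _ hc
    have : ltr p b c = 0 := by
      by_contra hcon
      exact hc (ltr_row (hU _ hp) hcon hpl)
    rw [this, zero_mul]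
  · simp

/-- The graph associated to a set of matrices. -/
def graphOf (U : Finset (Matrix (Fin n) (Fin n) ℂ)) : SimpleGraph (Fin n) where
  Adj a b := a ≠ b ∧ ∃ u ∈ U, u b a ≠ 0 ∨ u a b ≠ 0
  symm := ⟨by
    rintro a b ⟨h, u, hu, h2⟩
    exact ⟨h.symm, u, hu, h2.symm⟩⟩
  loopless := ⟨fun a h => h.1 rfl⟩

lemma adj_label {a b : Fin n} (h : (graphOf U).Adj a b) :
    ∃ p : Matrix (Fin n) (Fin n) ℂ × Bool, p.1 ∈ U ∧ ltr p b a ≠ 0 := by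
  obtain ⟨-, u, hu, h | h⟩ := h
  · exact ⟨(u, true), hu, by simpa [ltr] using h⟩
  · exact ⟨(u, false), hu, by simpa [ltr, conjTranspose_apply] using h⟩

/-- The label of a dart. -/
noncomputable def dLab (d : (graphOf U).Dart) : Matrix (Fin n) (Fin n) ℂ × Bool :=
  (adj_label d.adj).choose

lemma dLab_mem (d : (graphOf U).Dart) : (dLab d).1 ∈ U := (adj_label d.adj).choose_spec.1

lemma dLab_ne (d : (graphOf U).Dart) : ltr (dLab d) d.snd d.fst ≠ 0 :=
  (adj_label d.adj).choose_spec.2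

/-- The word associated to a walk. -/
noncomputable def walkWord {x y : Fin n} (p : (graphOf U).Walk x y) :
    List (Matrix (Fin n) (Fin n) ℂ × Bool) :=
  (p.darts.map dLab).reverse

lemma walkWord_eval (hU : ∀ u ∈ U, IsDNPI u) {x y : Fin n} (p : (graphOf U).Walk x y) :
    wordEval (walkWord p) y x ≠ 0 := by
  induction p with
  | nil => simp [walkWord, wordEval_eq, Matrix.one_apply]
  | @cons a b c h q ih =>
    have hdarts : (SimpleGraph.Walk.cons h q).darts = ⟨(a, b), h⟩ :: q.darts := rfl
    rw [walkWord, hdarts, List.map_cons, List.reverse_cons, wordEval_eq, List.map_append,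
      List.prod_append]
    set d : (graphOf U).Dart := ⟨(a, b), h⟩
    rw [List.map_singleton, List.prod_singleton]
    rw [Matrix.mul_apply]
    rw [Finset.sum_eq_single b]
    · have h1 : (List.map ltr (List.map dLab q.darts).reverse).prod c b ≠ 0 := by
        rw [← wordEval_eq]
        exact ih
      have h2 : ltr (dLab d) b a ≠ 0 := dLab_ne d
      exact mul_ne_zero h1 h2
    · intro k _ hk
      have : ltr (dLab d) k a = 0 := by
        by_contra hcon
        exact hk (ltr_col (hU _ (dLab_mem d)) hcon (dLab_ne d))
      rw [this, mul_zero]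
    · intro hb
      exact absurd (Finset.mem_univ b) hb

lemma chain'_and {α : Type*} {R S : α → α → Prop} {l : List α}
    (hR : List.Chain' R l) (hS : List.Chain' S l) :
    List.Chain' (fun a b => R a b ∧ S a b) l := by
  unfold List.Chain' at *
  rw [List.isChain_iff_getElem] at *
  exact fun i h => ⟨hR i h, hS i h⟩

lemma walkWord_reduced (hU : ∀ u ∈ U, IsDNPI u)
    {x : Fin n} {c : (graphOf U).Walk x x} (hc : c.IsCycle) :
    IsReducedWord (U : Set (Matrix (Fin n) (Fin n) ℂ)) (walkWord c) := by
  refine ⟨?_, ?_, ?_⟩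
  · have : c.darts ≠ [] := by
      have h3 := hc.three_le_length
      intro hnil
      have := c.length_darts
      rw [hnil] at this
      simp only [List.length_nil] at this
      omega
    simp [walkWord, this]
  · intro p hp
    rw [walkWord, List.mem_reverse, List.mem_map] at hp
    obtain ⟨d, -, rfl⟩ := hp
    simpa using dLab_mem d
  · unfold List.Chain'
    rw [walkWord, List.isChain_reverse, List.isChain_map]
    have h1 : List.Chain' (graphOf U).DartAdj c.darts := c.isChain_dartAdj_darts
    have h2 : List.Chain' (fun d d' : (graphOf U).Dart => d.edge ≠ d'.edge) c.darts := by
      have hnodup : c.edges.Nodup := hc.edges_nodup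
      have : List.Chain' (· ≠ ·) c.edges := List.Pairwise.isChain hnodup
      unfold List.Chain' at this
      rw [SimpleGraph.Walk.edges, List.isChain_map] at this
      exact this
    have h3 := chain'_and h1 h2
    refine List.IsChain.imp ?_ h3
    rintro d d' ⟨hadj, hedge⟩
    rintro ⟨h1', h2'⟩
    have hpd := dLab_ne d
    have hpd' := dLab_ne d'
    have hp2 : (dLab d').2 = !(dLab d).2 := by
      cases hdd : (dLab d).2 <;> cases hdd' : (dLab d').2 <;> simp_all
    have heq : dLab d' = ((dLab d).1, !(dLab d).2) := Prod.ext h1'.symm hp2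
    rw [heq, ltr_flip] at hpd'
    have hne2 : ltr (dLab d) d'.fst d'.snd ≠ 0 := by
      simpa using hpd'
    rw [← hadj] at hne2
    have hfs : d.fst = d'.snd := ltr_row (hU _ (dLab_mem d)) hpd hne2
    apply hedge
    have hprod : d'.toProd = (d.snd, d.fst) := Prod.ext hadj.symm hfs.symm
    rw [SimpleGraph.Dart.edge, SimpleGraph.Dart.edge, hadj, hfs]
    exact Sym2.eq_swap

lemma graph_acyclic (hU : ∀ u ∈ U, IsDNPI u)
    (ht : IsTreeing (U : Set (Matrix (Fin n) (Fin n) ℂ))) : (graphOf U).IsAcyclic := by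
  intro v c hc
  exact walkWord_eval hU c (ht _ (walkWord_reduced hU hc) v)

lemma graph_connected (hn : 1 ≤ n)
    (hg : IsGraphing (U : Set (Matrix (Fin n) (Fin n) ℂ))) :
    (graphOf U).Connected := by
  rw [SimpleGraph.connected_iff]
  refine ⟨?_, ⟨⟨0, hn⟩⟩⟩
  intro a b
  by_contra hreach
  set S : Set (Matrix (Fin n) (Fin n) ℂ) :=
    {d : Matrix (Fin n) (Fin n) ℂ | d.IsDiag} ∪ (U : Set (Matrix (Fin n) (Fin n) ℂ)) with hS
  have key : ∀ x ∈ StarAlgebra.adjoin ℂ S,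
      ∀ i j : Fin n, ¬ (graphOf U).Reachable i j → x i j = 0 := by
    intro x hx
    induction hx using StarAlgebra.adjoin_induction with
    | mem y hy =>
      intro i j hij
      rcases hy with hy | hy
      · by_contra h0
        have hij' : i ≠ j := by
          rintro rfl
          exact hij (SimpleGraph.Reachable.refl i)
        exact h0 (hy hij')
      · by_contra h0
        apply hij
        have hij' : i ≠ j := by
          rintro rfl
          exact hij (SimpleGraph.Reachable.refl i)
        exact SimpleGraph.Adj.reachable ⟨hij', y, hy, Or.inr h0⟩
    | algebraMap r =>
      intro i j hij
      have hij' : i ≠ j := by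
        rintro rfl
        exact hij (SimpleGraph.Reachable.refl i)
      simp [Matrix.algebraMap_matrix_apply, hij']
    | add x y hx hy ihx ihy =>
      intro i j hij
      simp [Matrix.add_apply, ihx i j hij, ihy i j hij]
    | mul x y hx hy ihx ihy =>
      intro i j hij
      rw [Matrix.mul_apply]
      apply Finset.sum_eq_zero
      intro c _
      by_cases hic : (graphOf U).Reachable i c
      · have : ¬ (graphOf U).Reachable c j := fun h => hij (hic.trans h)
        rw [ihy c j this, mul_zero]
      · rw [ihx i c hic, zero_mul]
    | star x hx ihx =>
      intro i j hij
      have : ¬ (graphOf U).Reachable j i := fun h => hij h.symm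
      show xᴴ i j = 0
      rw [conjTranspose_apply, ihx j i this, star_zero]
  have hmem : (Matrix.single a b (1:ℂ)) ∈ StarAlgebra.adjoin ℂ S := by
    rw [hg]; trivial
  have := key _ hmem a b hreach
  rw [Matrix.single_apply_same] at this
  exact one_ne_zero this

/-- The target of a nonzero column. -/
noncomputable def tgt (u : Matrix (Fin n) (Fin n) ℂ) (i : Fin n) : Fin n :=
  if h : ∃ a, u a i ≠ 0 then h.choose else i

lemma tgt_spec {i : Fin n} (h : i ∈ colSupp u) : u (tgt u i) i ≠ 0 := by
  classical
  rw [mem_colSupp_iff] at h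
  rw [tgt, dif_pos h]
  exact h.choose_spec

lemma ltr_tgt {i : Fin n} (h : i ∈ colSupp u) : ltr (u, true) (tgt u i) i ≠ 0 := by
  simpa [ltr] using tgt_spec h

lemma tgt_ne {i : Fin n}
    (ht : IsTreeing (U : Set (Matrix (Fin n) (Fin n) ℂ))) (hu : u ∈ U)
    (h : i ∈ colSupp u) : tgt u i ≠ i := by
  intro heq
  have := ltr_diag_zero (p := (u, true)) ht hu i
  rw [show ltr (u, true) i i = ltr (u, true) (tgt u i) i by rw [heq]] at this
  exact ltr_tgt h this

/-- Key uniqueness for the counting bijection. -/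
lemma edge_unique (hU : ∀ u ∈ U, IsDNPI u)
    (ht : IsTreeing (U : Set (Matrix (Fin n) (Fin n) ℂ)))
    {u v : Matrix (Fin n) (Fin n) ℂ} (hu : u ∈ U) (hv : v ∈ U)
    {i j : Fin n} (hi : i ∈ colSupp u) (hj : j ∈ colSupp v)
    (he : s(i, tgt u i) = s(j, tgt v j)) : u = v ∧ i = j := by
  rw [Sym2.eq_iff] at he
  rcases he with ⟨rfl, h2⟩ | ⟨h1, h2⟩
  · have := label_unique (p := (u, true)) (q := (v, true)) hU ht hu hv
      (ltr_tgt hi) (by rw [h2]; exact ltr_tgt hj)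
    exact ⟨congrArg Prod.fst this, rfl⟩
  · have hq : ltr (v, false) (tgt u i) i ≠ 0 := by
      simp only [ltr, if_neg Bool.false_ne_true, conjTranspose_apply, ne_eq, star_eq_zero]
      rw [h2, h1]
      exact tgt_spec hj
    have := label_unique (p := (u, true)) (q := (v, false)) hU ht hu hv (ltr_tgt hi) hq
    exact absurd (congrArg Prod.snd this) (by simp)

lemma edgeFinset_eq [Fintype (graphOf U).edgeSet] (hU : ∀ u ∈ U, IsDNPI u)
    (ht : IsTreeing (U : Set (Matrix (Fin n) (Fin n) ℂ))) :
    (graphOf U).edgeFinset =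
      U.biUnion (fun u => (colSupp u).image (fun i => s(i, tgt u i))) := by
  classical
  ext e
  induction e with
  | _ a b =>
    simp only [SimpleGraph.mem_edgeFinset, Finset.mem_biUnion, Finset.mem_image,
      SimpleGraph.mem_edgeSet]
    constructor
    · rintro ⟨hab, u, hu, h | h⟩
      · have ha : a ∈ colSupp u := mem_colSupp_iff.2 ⟨b, h⟩
        refine ⟨u, hu, a, ha, ?_⟩
        rw [col_unique (hU u hu) (tgt_spec ha) h]
      · have hb : b ∈ colSupp u := mem_colSupp_iff.2 ⟨a, h⟩
        refine ⟨u, hu, b, hb, ?_⟩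
        rw [col_unique (hU u hu) (tgt_spec hb) h]
        exact Sym2.eq_swap
    · rintro ⟨u, hu, i, hi, heq⟩
      have hadj : (graphOf U).Adj i (tgt u i) :=
        ⟨(tgt_ne ht hu hi).symm, u, hu, Or.inl (tgt_spec hi)⟩
      rw [Sym2.eq_iff] at heq
      rcases heq with ⟨h1, h2⟩ | ⟨h1, h2⟩
      · rw [← h1, ← h2]; exact hadj
      · rw [← h1, ← h2]; exact hadj.symm

lemma sum_rank_eq [Fintype (graphOf U).edgeSet] (hU : ∀ u ∈ U, IsDNPI u)
    (ht : IsTreeing (U : Set (Matrix (Fin n) (Fin n) ℂ))) :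
    ∑ u ∈ U, u.rank = (graphOf U).edgeFinset.card := by
  classical
  rw [edgeFinset_eq hU ht, Finset.card_biUnion]
  · apply Finset.sum_congr rfl
    intro u hu
    rw [rank_eq_card_cols (hU u hu), Finset.card_image_of_injOn]
    intro i hi j hj hij
    exact (edge_unique hU ht hu hu hi hj hij).2
  · intro u hu v hv huv
    rw [Function.onFun, Finset.disjoint_left]
    rintro e he1 he2
    rw [Finset.mem_image] at he1 he2
    obtain ⟨i, hi, rfl⟩ := he1
    obtain ⟨j, hj, heq⟩ := he2
    exact huv (edge_unique hU ht hu hv hi hj heq.symm).1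

end DNPIaux

open DNPIaux in
/-- If a finite set `U` of diagonal-normalizing partial isometries in `Mₙ(ℂ)` (`n ≥ 1`) is
simultaneously a graphing and a treeing, then `∑_{u ∈ U} rank u = n - 1`; equivalently the
`τ`-cost of `U` equals `1 - 1/n`. -/
theorem sum_rank_of_graphing_and_treeing {n : ℕ} (hn : 1 ≤ n)
    (U : Finset (Matrix (Fin n) (Fin n) ℂ)) (hU : ∀ u ∈ U, IsDNPI u)
    (hg : IsGraphing (U : Set (Matrix (Fin n) (Fin n) ℂ)))
    (ht : IsTreeing (U : Set (Matrix (Fin n) (Fin n) ℂ))) :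
    ∑ u ∈ U, u.rank = n - 1 := by
  classical
  have htree : (graphOf U).IsTree := ⟨graph_connected hn hg, graph_acyclic hU ht⟩
  have hcard := htree.card_edgeFinset
  rw [Fintype.card_fin] at hcard
  rw [sum_rank_eq hU ht]
  omega
end

section
/- Let n ≥ 1 and let U be a finite set of diagonal-normalizing partial isometries in Mₙ(ℂ) that is a graphing. Then ∑_{u ∈ U} rank u ≥ n − 1; equivalently, the τ-cost of U is at least 1 − 1/n. -/
open Matrix

section Aux

variable {n : ℕ}

/-- The star subalgebra of matrices supported on an equivalence relation. -/
def suppAlg (R : Fin n → Fin n → Prop) (hrefl : ∀ i, R i i)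
    (hsymm : ∀ {i j}, R i j → R j i) (htrans : ∀ {i j k}, R i j → R j k → R i k) :
    StarSubalgebra ℂ (Matrix (Fin n) (Fin n) ℂ) where
  carrier := {m | ∀ i j, m i j ≠ 0 → R i j}
  one_mem' := by
    intro i j h
    rcases eq_or_ne i j with rfl | hne
    · exact hrefl i
    · exact absurd (Matrix.one_apply_ne hne) h
  mul_mem' := by
    intro a b ha hb i j h
    rw [Matrix.mul_apply] at h
    obtain ⟨k, -, hk⟩ := Finset.exists_ne_zero_of_sum_ne_zero h
    exact htrans (ha i k (left_ne_zero_of_mul hk)) (hb k j (right_ne_zero_of_mul hk))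
  add_mem' := by
    intro a b ha hb i j h
    by_cases h1 : a i j = 0
    · refine hb i j fun h2 => h ?_
      simp [Matrix.add_apply, h1, h2]
    · exact ha i j h1
  zero_mem' := by intro i j h; simp at h
  algebraMap_mem' := by
    intro r i j h
    rcases eq_or_ne i j with rfl | hne
    · exact hrefl i
    · rw [Matrix.algebraMap_matrix_apply, if_neg hne] at h
      exact absurd rfl h
  star_mem' := by
    intro m hm i j h
    rw [Matrix.star_apply] at h
    exact hsymm (hm j i fun h2 => h (by rw [h2, star_zero]))

end Aux

/-- If a finite set `U` of diagonal-normalizing partial isometries in `Mₙ(ℂ)` (`n ≥ 1`) is a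
graphing, then `∑_{u ∈ U} rank u ≥ n - 1`; equivalently its `τ`-cost is at least `1 - 1/n`. -/
theorem sum_rank_ge_of_graphing {n : ℕ} (hn : 1 ≤ n)
    (U : Finset (Matrix (Fin n) (Fin n) ℂ)) (hU : ∀ u ∈ U, IsDNPI u)
    (hg : IsGraphing (U : Set (Matrix (Fin n) (Fin n) ℂ))) :
    n - 1 ≤ ∑ u ∈ U, u.rank := by
  classical
  haveI : NeZero n := ⟨by omega⟩
  set G : SimpleGraph (Fin n) :=
    { Adj := fun i j => i ≠ j ∧ ((∃ u ∈ U, u i j ≠ 0) ∨ (∃ u ∈ U, u j i ≠ 0))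
      symm := ⟨fun i j h => ⟨h.1.symm, h.2.symm⟩⟩
      loopless := ⟨fun i h => h.1 rfl⟩ } with hG
  -- every matrix in the adjoined algebra is supported on `G.Reachable`
  have hreach : ∀ i j : Fin n, G.Reachable i j := by
    set M := suppAlg (n := n) G.Reachable (fun i => .refl i)
      (fun h => h.symm) (fun h h' => h.trans h') with hM
    have hle : StarAlgebra.adjoin ℂ
        (({d : Matrix (Fin n) (Fin n) ℂ | d.IsDiag} ∪ (U : Set _))) ≤ M := by
      apply StarAlgebra.adjoin_le
      rintro m (hm | hm)
      · intro i j h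
        rcases eq_or_ne i j with rfl | hne
        · exact .refl i
        · exact absurd (hm hne) h
      · intro i j h
        rcases eq_or_ne i j with rfl | hne
        · exact .refl i
        · exact SimpleGraph.Adj.reachable ⟨hne, Or.inl ⟨m, hm, h⟩⟩
    intro i j
    have hmem : (Matrix.of fun _ _ => (1 : ℂ)) ∈ M := by
      apply hle
      rw [hg]
      exact StarSubalgebra.mem_top
    exact hmem i j one_ne_zero
  -- for each nonzero vertex, a witness edge going strictly closer to 0
  have hpred : ∀ v : Fin n, v ≠ 0 → ∃ p : Fin n × Fin n,
      (∃ u ∈ U, u p.1 p.2 ≠ 0) ∧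
      ((p.1 = v ∧ G.dist p.2 0 < G.dist v 0) ∨ (p.2 = v ∧ G.dist p.1 0 < G.dist v 0)) := by
    intro v hv
    obtain ⟨p, hp⟩ := (hreach v 0).exists_walk_length_eq_dist
    cases p with
    | nil => exact absurd rfl hv
    | @cons _ w _ h q =>
      have h1 : G.dist w 0 ≤ q.length := SimpleGraph.dist_le q
      rw [SimpleGraph.Walk.length_cons] at hp
      have hd : G.dist w 0 < G.dist v 0 := by omega
      rcases h.2 with hB | hB
      · exact ⟨(v, w), hB, Or.inl ⟨rfl, hd⟩⟩
      · exact ⟨(w, v), hB, Or.inr ⟨rfl, hd⟩⟩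
  -- the support finsets
  set supp : Matrix (Fin n) (Fin n) ℂ → Finset (Fin n × Fin n) :=
    fun u => Finset.univ.filter fun p => u p.1 p.2 ≠ 0 with hsupp
  -- injection of `Fin n \ {0}` into the union of supports
  have key : n - 1 ≤ (U.biUnion supp).card := by
    have hcard : (Finset.univ.erase (0 : Fin n)).card = n - 1 := by
      rw [Finset.card_erase_of_mem (Finset.mem_univ _)]
      simp
    rw [← hcard]
    apply Finset.card_le_card_of_injOn
      (fun v => if hv : v = (0 : Fin n) then (0, 0) else (hpred v hv).choose)
    · intro v hv
      have hv0 : v ≠ 0 := Finset.ne_of_mem_erase hv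
      obtain ⟨⟨u, hu, hne⟩, -⟩ := (hpred v hv0).choose_spec
      simp only [dif_neg hv0]
      exact Finset.mem_biUnion.2 ⟨u, hu, Finset.mem_filter.2 ⟨Finset.mem_univ _, hne⟩⟩
    · intro v hv v' hv' heq
      have hv0 : v ≠ 0 := Finset.ne_of_mem_erase hv
      have hv0' : v' ≠ 0 := Finset.ne_of_mem_erase hv'
      simp only [dif_neg hv0, dif_neg hv0'] at heq
      obtain ⟨-, hor⟩ := (hpred v hv0).choose_spec
      obtain ⟨-, hor'⟩ := (hpred v' hv0').choose_spec
      rw [heq] at hor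
      rcases hor with ⟨h1, h2⟩ | ⟨h1, h2⟩ <;> rcases hor' with ⟨h1', h2'⟩ | ⟨h1', h2'⟩
      · exact h1.symm.trans h1'
      · rw [h1'] at h2; rw [h1] at h2'; omega
      · rw [h1'] at h2; rw [h1] at h2'; omega
      · exact h1.symm.trans h1'
  refine key.trans ((Finset.card_biUnion_le).trans (Finset.sum_le_sum ?_))
  -- per-generator bound: |supp u| ≤ rank u
  intro u hu
  obtain ⟨-, hdn⟩ := hU u hu
  -- column uniqueness
  have hcol : ∀ i i' j, u i j ≠ 0 → u i' j ≠ 0 → i = i' := by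
    intro i i' j h h'
    by_contra hne
    have hdiag := (hdn (Matrix.diagonal (fun k => if k = j then (1:ℂ) else 0))
      (Matrix.isDiag_diagonal _)).1 hne
    have hent : (u * Matrix.diagonal (fun k => if k = j then (1:ℂ) else 0) * uᴴ) i i'
        = u i j * star (u i' j) := by
      simp [Matrix.mul_apply, Matrix.diagonal_apply, Matrix.conjTranspose_apply,
        mul_ite, ite_mul, zero_mul, mul_zero, Finset.sum_ite_eq]
    have hdiag2 : (u * Matrix.diagonal (fun k => if k = j then (1:ℂ) else 0) * uᴴ) i i' = 0 :=
      hdiag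
    rw [hent] at hdiag2
    rcases mul_eq_zero.mp hdiag2 with h0 | h0
    · exact h h0
    · exact h' (by simpa [star_eq_zero] using h0)
  -- `uᴴ * u` is diagonal with nonzero entries at nonzero columns
  have hdiag : (uᴴ * u).IsDiag := by
    have := (hdn 1 Matrix.isDiag_one).2
    rwa [mul_one] at this
  have hdvals : ∀ j, (∃ i, u i j ≠ 0) → (uᴴ * u) j j ≠ 0 := by
    intro j ⟨i, hij⟩
    have : (uᴴ * u) j j = ((∑ k, Complex.normSq (u k j) : ℝ) : ℂ) := by
      rw [Matrix.mul_apply, Complex.ofReal_sum]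
      refine Finset.sum_congr rfl fun k _ => ?_
      rw [Matrix.conjTranspose_apply, Complex.star_def, ← Complex.normSq_eq_conj_mul_self]
    rw [this]
    rw [Complex.ofReal_ne_zero]
    have hpos : 0 < ∑ k, Complex.normSq (u k j) :=
      Finset.sum_pos' (fun k _ => Complex.normSq_nonneg _)
        ⟨i, Finset.mem_univ i, Complex.normSq_pos.2 hij⟩
    exact hpos.ne'
  -- rank bound
  have hrank : (Finset.univ.filter fun j => (uᴴ * u) j j ≠ 0).card ≤ u.rank := by
    have h1 : (uᴴ * u).rank ≤ u.rank := Matrix.rank_mul_le_right _ _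
    have h2 : (uᴴ * u) = Matrix.diagonal (uᴴ * u).diag := hdiag.diagonal_diag.symm
    rw [h2, Matrix.rank_diagonal] at h1
    refine le_trans (le_of_eq ?_) h1
    rw [Fintype.card_subtype]
    rfl
  refine le_trans ?_ hrank
  apply Finset.card_le_card_of_injOn (fun p => p.2)
  · intro p hp
    rw [hsupp] at hp
    simp only [Finset.coe_filter, Set.mem_setOf_eq, Finset.mem_filter, Finset.mem_univ, true_and] at hp ⊢
    exact hdvals p.2 ⟨p.1, hp⟩
  · intro p hp p' hp' heq
    simp only [hsupp, Finset.coe_filter, Set.mem_setOf_eq, Finset.mem_univ, true_and]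
      at hp hp'
    have heq2 : p.2 = p'.2 := heq
    have := hcol p.1 p'.1 p.2 hp (heq2 ▸ hp')
    exact Prod.ext this heq2
end

section
/- Let n ≥ 1 and let U be a finite set of diagonal-normalizing partial isometries in Mₙ(ℂ) that is a graphing and satisfies ∑_{u ∈ U} rank u = n − 1 (i.e., U attains the minimal τ-cost 1 − 1/n among graphings). Then U is a treeing: the evaluation of every formally reduced word in U has all diagonal entries equal to 0. -/
open Matrix

section Aux

open Relation Finset

variable {n : ℕ}


private def edgeRel (E : Finset (Sym2 (Fin n))) (a b : Fin n) : Prop := s(a, b) ∈ E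

private def setoidOf (E : Finset (Sym2 (Fin n))) : Setoid (Fin n) :=
  Relation.EqvGen.setoid (edgeRel E)

private lemma setoidOf_r (E : Finset (Sym2 (Fin n))) (a b : Fin n) :
    (setoidOf E).r a b ↔ Relation.EqvGen (edgeRel E) a b := Iff.rfl

private lemma eqvGen_empty {a b : Fin n}
    (h : Relation.EqvGen (edgeRel (∅ : Finset (Sym2 (Fin n)))) a b) : a = b := by
  induction h with
  | rel a b h => exact absurd h (Finset.notMem_empty _)
  | refl a => rfl
  | symm a b _ ih => exact ih.symm
  | trans a b c _ _ ih1 ih2 => exact ih1.trans ih2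

private lemma card_le_classes_add_card (E : Finset (Sym2 (Fin n))) :
    n ≤ Nat.card (Quotient (setoidOf E)) + E.card := by
  classical
  induction E using Finset.induction_on with
  | empty =>
      rw [Finset.card_empty, add_zero]
      have hbij : Function.Bijective (Quotient.mk (setoidOf (∅ : Finset (Sym2 (Fin n))))) := by
        constructor
        · intro a b h
          exact eqvGen_empty (Quotient.exact h)
        · exact Quotient.exists_rep
      exact le_of_eq ((Nat.card_eq_fintype_card.trans (Fintype.card_fin n)).symm.trans
        (Nat.card_eq_of_bijective _ hbij))
  | @insert e E he ih =>
      induction e using Sym2.ind with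
      | _ x y =>
        refine le_trans ih ?_
        rw [Finset.card_insert_of_notMem he]
        have hQle : Nat.card (Quotient (setoidOf E)) ≤
            Nat.card (Quotient (setoidOf (insert s(x, y) E))) + 1 := by
          set E' := insert s(x, y) E with hE'
          have key : ∀ a b : Fin n, Relation.EqvGen (edgeRel E') a b →
              Relation.EqvGen (edgeRel E) a b ∨
                ((Relation.EqvGen (edgeRel E) a x ∨ Relation.EqvGen (edgeRel E) a y) ∧
                 (Relation.EqvGen (edgeRel E) b x ∨ Relation.EqvGen (edgeRel E) b y)) := by
            intro a b h
            induction h with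
            | rel a b h =>
                rcases Finset.mem_insert.mp h with h | h
                · rcases Sym2.eq_iff.mp h with ⟨rfl, rfl⟩ | ⟨rfl, rfl⟩
                  · exact Or.inr ⟨Or.inl (EqvGen.refl _), Or.inr (EqvGen.refl _)⟩
                  · exact Or.inr ⟨Or.inr (EqvGen.refl _), Or.inl (EqvGen.refl _)⟩
                · exact Or.inl (EqvGen.rel _ _ h)
            | refl a => exact Or.inl (EqvGen.refl _)
            | symm a b _ ih =>
                rcases ih with h | ⟨h1, h2⟩
                · exact Or.inl (EqvGen.symm _ _ h)
                · exact Or.inr ⟨h2, h1⟩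
            | trans a b c _ _ ih1 ih2 =>
                rcases ih1 with h1 | ⟨ta, tb⟩ <;> rcases ih2 with h2 | ⟨tb', tc⟩
                · exact Or.inl (EqvGen.trans _ _ _ h1 h2)
                · refine Or.inr ⟨?_, tc⟩
                  rcases tb' with h | h
                  · exact Or.inl (EqvGen.trans _ _ _ h1 h)
                  · exact Or.inr (EqvGen.trans _ _ _ h1 h)
                · refine Or.inr ⟨ta, ?_⟩
                  rcases tb with h | h
                  · exact Or.inl (EqvGen.trans _ _ _ (EqvGen.symm _ _ h2) h)
                  · exact Or.inr (EqvGen.trans _ _ _ (EqvGen.symm _ _ h2) h)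
                · exact Or.inr ⟨ta, tc⟩
          have hmono : ∀ a b : Fin n, Relation.EqvGen (edgeRel E) a b →
              Relation.EqvGen (edgeRel E') a b := fun a b h =>
            EqvGen.mono (r := edgeRel E) (p := edgeRel E') (fun a b h => Finset.mem_insert_of_mem h) a b h
          set F : Quotient (setoidOf E) → Quotient (setoidOf E') :=
            Quotient.map id (fun a b h => hmono a b h) with hF
          have hFmk : ∀ a : Fin n, F (Quotient.mk (setoidOf E) a)
              = Quotient.mk (setoidOf E') a := fun a => rfl
          set Y : Quotient (setoidOf E) := Quotient.mk (setoidOf E) y with hY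
          have hsurj : Function.Surjective
              (fun o : Option (Quotient (setoidOf E')) => Option.elim o Y
                (fun q' => if h : ∃ q, F q = q' ∧ q ≠ Y then h.choose else Y)) := by
            intro q
            by_cases hq : q = Y
            · exact ⟨none, hq.symm⟩
            · refine ⟨some (F q), ?_⟩
              have hex : ∃ q0, F q0 = F q ∧ q0 ≠ Y := ⟨q, rfl, hq⟩
              simp only [Option.elim, dif_pos hex]
              obtain ⟨h1, h2⟩ := hex.choose_spec
              obtain ⟨a, ha⟩ := hex.choose.exists_rep
              obtain ⟨b, hb⟩ := q.exists_rep
              rw [← ha, ← hb] at h1 ⊢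
              rw [hFmk, hFmk] at h1
              have h3 := Quotient.exact h1
              rcases key a b h3 with h4 | ⟨ta, tb⟩
              · exact Quotient.sound h4
              · have hax : Relation.EqvGen (edgeRel E) a x := by
                  rcases ta with h | h
                  · exact h
                  · exact absurd (ha ▸ Quotient.sound h) h2
                have hbx : Relation.EqvGen (edgeRel E) b x := by
                  rcases tb with h | h
                  · exact h
                  · exact absurd (hb ▸ Quotient.sound h) hq
                exact Quotient.sound (EqvGen.trans _ _ _ hax (EqvGen.symm _ _ hbx))
          calc Nat.card (Quotient (setoidOf E))
              ≤ Nat.card (Option (Quotient (setoidOf E'))) :=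
                Nat.card_le_card_of_surjective _ hsurj
            _ = Nat.card (Quotient (setoidOf E')) + 1 := by
                simp [Nat.card_eq_fintype_card]
        omega

private lemma card_le_of_total (E : Finset (Sym2 (Fin n)))
    (htot : ∀ a b : Fin n, Relation.EqvGen (edgeRel E) a b) (hn : 1 ≤ n) :
    n - 1 ≤ E.card := by
  have h1 : Nat.card (Quotient (setoidOf E)) = 1 := by
    rw [Nat.card_eq_one_iff_exists]
    refine ⟨Quotient.mk (setoidOf E) ⟨0, hn⟩, fun q => ?_⟩
    obtain ⟨a, rfl⟩ := q.exists_rep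
    exact Quotient.sound (htot a ⟨0, hn⟩)
  have := card_le_classes_add_card E
  omega

private lemma eqvGen_le' {α : Type*} {r p : α → α → Prop}
    (h : ∀ a b, r a b → Relation.EqvGen p a b) :
    ∀ {a b}, Relation.EqvGen r a b → Relation.EqvGen p a b := by
  intro a b hab
  induction hab with
  | rel a b h' => exact h a b h'
  | refl a => exact EqvGen.refl _
  | symm a b _ ih => exact EqvGen.symm _ _ ih
  | trans a b c _ _ ih1 ih2 => exact EqvGen.trans _ _ _ ih1 ih2

private lemma no_loop {E : Finset (Sym2 (Fin n))}
    (htot : ∀ a b : Fin n, Relation.EqvGen (edgeRel E) a b)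
    (hcard : E.card ≤ n - 1) (a : Fin n) : s(a, a) ∉ E := by
  intro ha
  have htot' : ∀ b c : Fin n, Relation.EqvGen (edgeRel (E.erase s(a, a))) b c := by
    intro b c
    refine eqvGen_le' ?_ (htot b c)
    intro b c h
    by_cases hbc : s(b, c) = s(a, a)
    · rcases Sym2.eq_iff.mp hbc with ⟨rfl, rfl⟩ | ⟨rfl, rfl⟩ <;> exact EqvGen.refl _
    · exact EqvGen.rel _ _ (Finset.mem_erase.mpr ⟨hbc, h⟩)
  have h1 : n - 1 ≤ (E.erase s(a, a)).card := by
    by_cases hn : 1 ≤ n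
    · exact card_le_of_total _ htot' hn
    · omega
  have h2 := Finset.card_erase_of_mem ha
  have h3 := Finset.card_pos.mpr ⟨_, ha⟩
  have h4 : 1 ≤ n := by
    rcases Nat.eq_zero_or_pos n with rfl | h; · exact absurd a.2 (by omega)
    · exact h
  omega

private lemma bridge {E : Finset (Sym2 (Fin n))}
    (htot : ∀ a b : Fin n, Relation.EqvGen (edgeRel E) a b)
    (hcard : E.card ≤ n - 1) {x y : Fin n} (he : s(x, y) ∈ E) :
    ¬ Relation.EqvGen (edgeRel (E.erase s(x, y))) x y := by
  intro hreach
  have htot' : ∀ a b : Fin n, Relation.EqvGen (edgeRel (E.erase s(x, y))) a b := by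
    intro a b
    refine eqvGen_le' ?_ (htot a b)
    intro a b h
    by_cases hab : s(a, b) = s(x, y)
    · rcases Sym2.eq_iff.mp hab with ⟨rfl, rfl⟩ | ⟨rfl, rfl⟩
      · exact hreach
      · exact EqvGen.symm _ _ hreach
    · exact EqvGen.rel _ _ (Finset.mem_erase.mpr ⟨hab, h⟩)
  have h1 : n - 1 ≤ (E.erase s(x, y)).card := by
    by_cases hn : 1 ≤ n
    · exact card_le_of_total _ htot' hn
    · omega
  have h2 := Finset.card_erase_of_mem he
  have h3 := Finset.card_pos.mpr ⟨_, he⟩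
  have h4 : 1 ≤ n := by
    rcases Nat.eq_zero_or_pos n with rfl | h; · exact absurd x.2 (by omega)
    · exact h
  omega

private lemma no_closed_walk {E : Finset (Sym2 (Fin n))}
    (htot : ∀ a b : Fin n, Relation.EqvGen (edgeRel E) a b)
    (hcard : E.card ≤ n - 1) :
    ∀ ℓ : ℕ, 1 ≤ ℓ → ∀ g : ℕ → Fin n, g ℓ = g 0 →
      (∀ k < ℓ, s(g k, g (k + 1)) ∈ E) →
      (∀ k < ℓ, g k ≠ g (k + 1)) →
      (∀ k, k + 2 ≤ ℓ → s(g k, g (k + 1)) ≠ s(g (k + 1), g (k + 2))) → False := by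
  intro ℓ
  induction ℓ using Nat.strong_induction_on with
  | _ ℓ IH =>
    intro hℓ g hclosed hedge hne hcons
    rcases Nat.lt_or_ge ℓ 2 with h2 | h2
    · have hℓ1 : ℓ = 1 := by omega
      subst hℓ1
      exact hne 0 one_pos hclosed.symm
    · by_cases hrep : ∃ k, 1 ≤ k ∧ k < ℓ ∧ s(g k, g (k + 1)) = s(g 0, g 1)
      · obtain ⟨k, hk1, hkℓ, hke⟩ := hrep
        rcases Sym2.eq_iff.mp hke with ⟨h0, h1⟩ | ⟨h0, h1⟩
        · exact IH k hkℓ hk1 g h0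
            (fun t ht => hedge t (ht.trans hkℓ))
            (fun t ht => hne t (ht.trans hkℓ))
            (fun t ht => hcons t (le_trans ht hkℓ.le))
        · rcases Nat.lt_or_ge k 2 with hk2 | hk2
          · have hk : k = 1 := by omega
            subst hk
            exact hcons 0 h2 hke.symm
          · refine IH (k - 1) (by omega) (by omega) (fun t => g (t + 1)) ?_ ?_ ?_ ?_
            · show g (k - 1 + 1) = g 1
              rw [Nat.sub_add_cancel (by omega)]
              exact h0
            · intro t ht; exact hedge (t + 1) (by omega)
            · intro t ht; exact hne (t + 1) (by omega)
            · intro t ht; exact hcons (t + 1) (by omega)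
      · push_neg at hrep
        have hb := bridge htot hcard (hedge 0 (by omega))
        apply hb
        have chain : ∀ m, 1 ≤ m → m ≤ ℓ →
            Relation.EqvGen (edgeRel (E.erase s(g 0, g 1))) (g 1) (g m) := by
          intro m hm
          induction m, hm using Nat.le_induction with
          | base => intro _; exact EqvGen.refl _
          | succ m hm ih =>
            intro hmℓ
            refine EqvGen.trans _ _ _ (ih (by omega)) (EqvGen.rel _ _ ?_)
            exact Finset.mem_erase.mpr ⟨hrep m hm (by omega), hedge m (by omega)⟩
        have := chain ℓ (by omega) le_rfl
        rw [hclosed] at this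
        exact EqvGen.symm _ _ this

private lemma dnpi_entry_mul {u : Matrix (Fin n) (Fin n) ℂ} (k i j : Fin n) :
    (u * diagonal (fun t => if t = k then (1 : ℂ) else 0) * uᴴ) i j
      = u i k * star (u j k) := by
  rw [Matrix.mul_apply]
  rw [Finset.sum_eq_single k]
  · rw [Matrix.mul_diagonal, Matrix.conjTranspose_apply, if_pos rfl, mul_one]
  · intro b _ hb
    rw [Matrix.mul_diagonal, if_neg hb, mul_zero, zero_mul]
  · intro h; exact absurd (Finset.mem_univ k) h

private lemma dnpi_entry_mul' {u : Matrix (Fin n) (Fin n) ℂ} (k i j : Fin n) :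
    (uᴴ * diagonal (fun t => if t = k then (1 : ℂ) else 0) * u) i j
      = star (u k i) * u k j := by
  rw [Matrix.mul_apply]
  rw [Finset.sum_eq_single k]
  · rw [Matrix.mul_diagonal, Matrix.conjTranspose_apply, if_pos rfl, mul_one]
  · intro b _ hb
    rw [Matrix.mul_diagonal, if_neg hb, mul_zero, zero_mul]
  · intro h; exact absurd (Finset.mem_univ k) h

private lemma col_unique {u : Matrix (Fin n) (Fin n) ℂ} (hu : IsDNPI u)
    {i j k : Fin n} (hi : u i k ≠ 0) (hj : u j k ≠ 0) : i = j := by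
  by_contra hij
  have hd : (u * diagonal (fun t => if t = k then (1 : ℂ) else 0) * uᴴ) i j = 0 :=
    (hu.2 (diagonal fun t => if t = k then (1 : ℂ) else 0) (isDiag_diagonal _)).1 hij
  rw [dnpi_entry_mul k i j] at hd
  exact mul_ne_zero hi (star_ne_zero.mpr hj) hd

private lemma row_unique {u : Matrix (Fin n) (Fin n) ℂ} (hu : IsDNPI u)
    {i j k : Fin n} (hi : u k i ≠ 0) (hj : u k j ≠ 0) : i = j := by
  by_contra hij
  have hd : (uᴴ * diagonal (fun t => if t = k then (1 : ℂ) else 0) * u) i j = 0 :=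
    (hu.2 (diagonal fun t => if t = k then (1 : ℂ) else 0) (isDiag_diagonal _)).2 hij
  rw [dnpi_entry_mul' k i j] at hd
  exact mul_ne_zero (star_ne_zero.mpr hi) hj hd

private noncomputable def slotsOf (u : Matrix (Fin n) (Fin n) ℂ) : Finset (Fin n × Fin n) := by
  classical exact Finset.univ.filter (fun p => u p.1 p.2 ≠ 0)

private lemma mem_slotsOf {u : Matrix (Fin n) (Fin n) ℂ} {p : Fin n × Fin n} :
    p ∈ slotsOf u ↔ u p.1 p.2 ≠ 0 := by
  classical
  simp [slotsOf]

open scoped ComplexOrder in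
private lemma rank_eq_card_slots {u : Matrix (Fin n) (Fin n) ℂ} (hu : IsDNPI u) :
    u.rank = (slotsOf u).card := by
  classical
  have hdiag : (u * uᴴ).IsDiag := by
    have := (hu.2 1 Matrix.isDiag_one).1
    rwa [mul_one] at this
  have h1 : u.rank = (u * uᴴ).rank := (rank_self_mul_conjTranspose u).symm
  rw [h1, ← hdiag.diagonal_diag, rank_diagonal]
  have hdiagentry : ∀ i : Fin n, (u * uᴴ).diag i ≠ 0 ↔ ∃ j, u i j ≠ 0 := by
    intro i
    have hsum : (u * uᴴ).diag i = ((∑ b, Complex.normSq (u i b) : ℝ) : ℂ) := by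
      rw [Matrix.diag_apply, Matrix.mul_apply]
      push_cast
      refine Finset.sum_congr rfl fun b _ => ?_
      rw [Matrix.conjTranspose_apply, Complex.star_def, Complex.mul_conj]
    rw [hsum]
    rw [Ne, Complex.ofReal_eq_zero]
    rw [Finset.sum_eq_zero_iff_of_nonneg (fun b _ => Complex.normSq_nonneg _)]
    push_neg
    constructor
    · rintro ⟨j, _, hj⟩; exact ⟨j, fun h0 => hj (by rw [h0, map_zero])⟩
    · rintro ⟨j, hj⟩; exact ⟨j, Finset.mem_univ j, fun h0 => hj (Complex.normSq_eq_zero.mp h0)⟩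
  rw [Fintype.card_subtype]
  refine (Finset.card_bij (fun p _ => p.1) ?_ ?_ ?_).symm
  · intro p hp
    rw [Finset.mem_filter]
    exact ⟨Finset.mem_univ _, (hdiagentry p.1).mpr ⟨p.2, mem_slotsOf.mp hp⟩⟩
  · intro p hp q hq hpq
    have hpq' : p.1 = q.1 := hpq
    have h1 := mem_slotsOf.mp hp
    have h2 := mem_slotsOf.mp hq
    rw [hpq'] at h1
    exact Prod.ext hpq' (row_unique hu h1 h2)
  · intro i hi
    obtain ⟨j, hj⟩ := (hdiagentry i).mp (Finset.mem_filter.mp hi).2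
    exact ⟨(i, j), mem_slotsOf.mpr hj, rfl⟩

private lemma reach_total {U : Finset (Matrix (Fin n) (Fin n) ℂ)}
    (hg : IsGraphing (U : Set (Matrix (Fin n) (Fin n) ℂ))) (i j : Fin n) :
    Relation.EqvGen (fun a b => ∃ u ∈ U, u a b ≠ 0) i j := by
  by_contra hR
  set R : Fin n → Fin n → Prop :=
    fun a b => Relation.EqvGen (fun a b => ∃ u ∈ U, u a b ≠ 0) a b with hRdef
  let S : StarSubalgebra ℂ (Matrix (Fin n) (Fin n) ℂ) :=
    { carrier := {m | ∀ a b, ¬ R a b → m a b = 0}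
      mul_mem' := by
        intro x y hx hy a b hab
        rw [Matrix.mul_apply]
        refine Finset.sum_eq_zero fun c _ => ?_
        by_cases hac : R a c
        · have hcb : ¬ R c b := fun h => hab (EqvGen.trans _ _ _ hac h)
          rw [hy c b hcb, mul_zero]
        · rw [hx a c hac, zero_mul]
      one_mem' := by
        intro a b hab
        have : a ≠ b := fun h => hab (h ▸ EqvGen.refl a)
        exact Matrix.one_apply_ne this
      add_mem' := by
        intro x y hx hy a b hab
        rw [Matrix.add_apply, hx a b hab, hy a b hab, add_zero]
      zero_mem' := by intro a b _; rfl
      algebraMap_mem' := by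
        intro c a b hab
        rw [Matrix.algebraMap_matrix_apply]
        have : a ≠ b := fun h => hab (h ▸ EqvGen.refl a)
        rw [if_neg this]
      star_mem' := by
        intro x hx a b hab
        have hba : ¬ R b a := fun h => hab (EqvGen.symm _ _ h)
        show star (x b a) = 0
        rw [hx b a hba, star_zero] }
  have hle : StarAlgebra.adjoin ℂ
      ({d : Matrix (Fin n) (Fin n) ℂ | d.IsDiag} ∪ (U : Set (Matrix (Fin n) (Fin n) ℂ))) ≤ S := by
    refine StarAlgebra.adjoin_le ?_
    rintro m (hm | hm)
    · intro a b hab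
      have : a ≠ b := fun h => hab (h ▸ EqvGen.refl a)
      exact hm this
    · intro a b hab
      by_contra h0
      exact hab (EqvGen.rel _ _ ⟨m, hm, h0⟩)
  have hmem : Matrix.single i j (1 : ℂ) ∈ S :=
    hle (hg.symm ▸ StarSubalgebra.mem_top)
  have := hmem i j hR
  rw [Matrix.single_apply_same] at this
  exact one_ne_zero this

private lemma exists_path {L : List (Matrix (Fin n) (Fin n) ℂ)} {a b : Fin n}
    (h : L.prod a b ≠ 0) :
    ∃ g : ℕ → Fin n, g 0 = a ∧ g L.length = b ∧
      ∀ k, k < L.length → (L.getD k 1) (g k) (g (k + 1)) ≠ 0 := by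
  induction L generalizing a with
  | nil =>
      have hab : a = b := by
        by_contra hab
        rw [List.prod_nil, Matrix.one_apply_ne hab] at h
        exact h rfl
      exact ⟨fun _ => a, rfl, hab, fun k hk => absurd hk (by simp)⟩
  | cons M L ih =>
      rw [List.prod_cons, Matrix.mul_apply] at h
      obtain ⟨c, hc⟩ : ∃ c, M a c * L.prod c b ≠ 0 := by
        by_contra hc
        push_neg at hc
        exact h (Finset.sum_eq_zero fun c _ => hc c)
      have hM : M a c ≠ 0 := fun h0 => hc (by rw [h0, zero_mul])
      have hL : L.prod c b ≠ 0 := fun h0 => hc (by rw [h0, mul_zero])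
      obtain ⟨g, hg0, hgl, hgstep⟩ := ih hL
      refine ⟨fun k => if k = 0 then a else g (k - 1), if_pos rfl, ?_, ?_⟩
      · simp only [List.length_cons]
        rw [if_neg (Nat.succ_ne_zero _)]
        simpa using hgl
      · intro k hk
        match k with
        | 0 =>
            simp only [List.getD_cons_zero, if_pos rfl, if_neg one_ne_zero]
            simpa [hg0] using hM
        | (t + 1) =>
            simp only [List.getD_cons_succ, if_neg (Nat.succ_ne_zero _),
              Nat.succ_sub_one]
            exact hgstep t (by simpa [List.length_cons] using hk)


end Aux

/-- A finite graphing `U` of diagonal-normalizing partial isometries in `Mₙ(ℂ)` (`n ≥ 1`)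
with `∑_{u ∈ U} rank u = n - 1` (i.e. attaining the minimal `τ`-cost `1 - 1/n` among
graphings) must be a treeing. -/
theorem treeing_of_graphing_of_minimal_cost {n : ℕ} (hn : 1 ≤ n)
    (U : Finset (Matrix (Fin n) (Fin n) ℂ)) (hU : ∀ u ∈ U, IsDNPI u)
    (hg : IsGraphing (U : Set (Matrix (Fin n) (Fin n) ℂ)))
    (hc : ∑ u ∈ U, u.rank = n - 1) :
    IsTreeing (U : Set (Matrix (Fin n) (Fin n) ℂ)) := by
  classical
  set f : (Matrix (Fin n) (Fin n) ℂ × Bool) → Matrix (Fin n) (Fin n) ℂ :=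
    fun p => if p.2 then p.1 else p.1ᴴ with hf
  set T : Finset ((Matrix (Fin n) (Fin n) ℂ) × (Fin n × Fin n)) :=
    U.biUnion (fun u => (slotsOf u).image (fun p => (u, p))) with hT
  have hmemT : ∀ q : (Matrix (Fin n) (Fin n) ℂ) × (Fin n × Fin n),
      q ∈ T ↔ q.1 ∈ U ∧ q.2 ∈ slotsOf q.1 := by
    intro q
    simp only [hT, Finset.mem_biUnion, Finset.mem_image]
    constructor
    · rintro ⟨u, hu, p, hp, rfl⟩; exact ⟨hu, hp⟩
    · rintro ⟨hq, hp⟩; exact ⟨q.1, hq, q.2, hp, rfl⟩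
  have hcardT : T.card = n - 1 := by
    rw [hT, Finset.card_biUnion]
    · rw [← hc]
      refine Finset.sum_congr rfl fun u hu => ?_
      rw [Finset.card_image_of_injective _ (fun p q h => (Prod.ext_iff.mp h).2),
        rank_eq_card_slots (hU u hu)]
    · intro u hu v hv huv
      rw [Function.onFun, Finset.disjoint_left]
      rintro q hqu hqv
      rw [Finset.mem_image] at hqu hqv
      obtain ⟨p, _, rfl⟩ := hqu
      obtain ⟨p', _, h⟩ := hqv
      exact huv ((Prod.ext_iff.mp h).1.symm)
  set ed : ((Matrix (Fin n) (Fin n) ℂ) × (Fin n × Fin n)) → Sym2 (Fin n) :=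
    fun q => s(q.2.1, q.2.2) with hed
  set E : Finset (Sym2 (Fin n)) := T.image ed with hE
  have hedgemem : ∀ q ∈ T, ed q ∈ E := fun q hq => Finset.mem_image_of_mem _ hq
  have htotE : ∀ a b : Fin n, Relation.EqvGen (edgeRel E) a b := by
    intro a b
    refine eqvGen_le' ?_ (reach_total hg a b)
    rintro a b ⟨u, hu, h0⟩
    refine Relation.EqvGen.rel _ _ ?_
    show s(a, b) ∈ E
    exact hedgemem (u, (a, b)) ((hmemT _).mpr ⟨hu, mem_slotsOf.mpr h0⟩)
  have hEcard_le : E.card ≤ n - 1 := hcardT ▸ Finset.card_image_le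
  have hEcard : E.card = T.card := by
    have := card_le_of_total E htotE hn
    omega
  have hinj : Set.InjOn ed (T : Set _) := Finset.card_image_iff.mp (hE ▸ hEcard)
  have hnoloopT : ∀ q ∈ T, q.2.1 ≠ q.2.2 := by
    rintro q hq heq
    refine no_loop htotE hEcard_le q.2.1 ?_
    have h1 : s(q.2.1, q.2.2) ∈ E := hedgemem q hq
    rwa [← heq] at h1
  intro w hw i
  by_contra h0
  obtain ⟨hwne, hwmem, hwchain⟩ := hw
  set L : List (Matrix (Fin n) (Fin n) ℂ) := w.map f with hLdef
  have hlen : L.length = w.length := List.length_map _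
  obtain ⟨g, hg0, hgl, hgstep⟩ := exists_path (show L.prod i i ≠ 0 from h0)
  set ℓ := w.length with hℓdef
  have hℓ : 1 ≤ ℓ := List.length_pos_iff.mpr hwne
  set pk : ℕ → (Matrix (Fin n) (Fin n) ℂ × Bool) := fun k => w.getD k (1, true) with hpk
  have hgetD : ∀ k, k < ℓ → L.getD k 1 = f (pk k) := by
    intro k hk
    have h1 : f ((1 : Matrix (Fin n) (Fin n) ℂ), true) = 1 := by simp [hf]
    rw [← h1, hLdef, List.getD_map]
  have hstep : ∀ k, k < ℓ → f (pk k) (g k) (g (k + 1)) ≠ 0 := by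
    intro k hk
    have := hgstep k (hlen ▸ hk)
    rwa [hgetD k hk] at this
  have hpkU : ∀ k, k < ℓ → (pk k).1 ∈ U := by
    intro k hk
    refine hwmem _ ?_
    have hh : pk k = w[k] := List.getD_eq_getElem _ _ hk
    rw [hh]
    exact List.getElem_mem _
  set σ : ℕ → Fin n × Fin n :=
    fun k => if (pk k).2 then (g k, g (k + 1)) else (g (k + 1), g k) with hσ
  have hqT : ∀ k, k < ℓ → ((pk k).1, σ k) ∈ T := by
    intro k hk
    refine (hmemT _).mpr ⟨hpkU k hk, mem_slotsOf.mpr ?_⟩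
    have := hstep k hk
    rw [hf] at this
    rw [hσ]
    by_cases hb : (pk k).2
    · simp only [hb, if_true] at this ⊢
      exact this
    · simp only [hb, if_false, Bool.false_eq_true] at this ⊢
      rw [Matrix.conjTranspose_apply] at this
      exact star_ne_zero.mp this
  have hedq : ∀ k, k < ℓ → ed ((pk k).1, σ k) = s(g k, g (k + 1)) := by
    intro k hk
    rw [hed, hσ]
    by_cases hb : (pk k).2
    · simp [hb]
    · simp only [hb, if_false, Bool.false_eq_true]
      exact Sym2.eq_swap
  refine no_closed_walk htotE hEcard_le ℓ hℓ g ?_ ?_ ?_ ?_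
  · rw [hg0, ← hlen]
    exact hgl
  · intro k hk
    rw [← hedq k hk]
    exact hedgemem _ (hqT k hk)
  · intro k hk heq
    have := hnoloopT _ (hqT k hk)
    rw [hσ] at this
    by_cases hb : (pk k).2
    · simp only [hb, if_true] at this
      exact this heq
    · simp only [hb, if_false, Bool.false_eq_true] at this
      exact this heq.symm
  · intro k hk2
    have hk : k < ℓ := by omega
    have hk1 : k + 1 < ℓ := by omega
    intro heq
    have hedeq : ed ((pk k).1, σ k) = ed ((pk (k + 1)).1, σ (k + 1)) := by
      rw [hedq k hk, hedq (k + 1) hk1, heq]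
    have hq := hinj (hqT k hk) (hqT (k + 1) hk1) hedeq
    have hu : (pk (k + 1)).1 = (pk k).1 := ((Prod.ext_iff.mp hq).1).symm
    have hσeq : σ k = σ (k + 1) := (Prod.ext_iff.mp hq).2
    have hchain := List.isChain_iff_getElem.mp hwchain k (by omega)
    have hget : ∀ t (ht : t < ℓ), w.get ⟨t, ht⟩ = pk t := by
      intro t ht
      rw [hpk]
      exact (List.getD_eq_get _ _ ⟨t, ht⟩).symm
    rw [show w[k] = pk k from hget k hk, show w[k + 1] = pk (k + 1) from hget (k + 1) hk1] at hchain
    have hbeq : (pk (k + 1)).2 = (pk k).2 := by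
      by_contra hbne
      exact hchain ⟨hu, hbne⟩
    simp only [hσ] at hσeq
    by_cases hb : (pk k).2
    · rw [if_pos hb, if_pos (hbeq.trans hb)] at hσeq
      have hgk : g k = g (k + 1) := (Prod.ext_iff.mp hσeq).1
      have hnl := hnoloopT _ (hqT k hk)
      simp only [hσ, hb, if_true] at hnl
      exact hnl hgk
    · rw [if_neg hb, if_neg (fun h => hb (hbeq ▸ h))] at hσeq
      have hgk : g (k + 1) = g (k + 2) := (Prod.ext_iff.mp hσeq).1
      have hnl := hnoloopT _ (hqT (k + 1) hk1)
      simp only [hσ] at hnl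
      by_cases hb1 : (pk (k + 1)).2
      · exact absurd (hbeq ▸ hb1) hb
      · rw [if_neg hb1] at hnl
        exact hnl hgk.symm
end

section
/- Let n ≥ 1 and let G be a simple graph on the vertex set Fin n. The star-subalgebra of Mₙ(ℂ) generated by the diagonal matrices A together with the edge matrix units U_G equals all of Mₙ(ℂ) (i.e., U_G is a graphing) if and only if the graph G is connected. -/
open Matrix

/-- The edge matrix units of a simple graph `G` on `Fin n`: one standard matrix unit
`E_{ij}` for each edge `{i, j}` of `G` with `i < j`. -/
def edgeUnits {n : ℕ} (G : SimpleGraph (Fin n)) : Set (Matrix (Fin n) (Fin n) ℂ) :=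
  {u | ∃ i j : Fin n, i < j ∧ G.Adj i j ∧ u = Matrix.single i j (1 : ℂ)}

/-!
The matrices whose `(i, j)` entry vanishes unless `j` is reachable from `i` in `G` form a
star-subalgebra, and it is exactly the one generated by the diagonal matrices and `U_G`: the
generators are supported on reachable pairs, and a walk `i = v₀, v₁, …, v_k = j` gives
`E_{ij} = E_{v₀v₁} ⋯ E_{v_{k-1}v_k}` with each factor an edge unit or its adjoint. This
subalgebra is all of `Mₙ(ℂ)` iff every two vertices are joined by a walk.
-/

namespace SimpleGraph

variable {ι : Type*} (R : Type*) [Fintype ι] [DecidableEq ι] [CommSemiring R] [StarRing R]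

def reachableSupported (G : SimpleGraph ι) : StarSubalgebra R (Matrix ι ι R) where
  carrier := {A | ∀ i j, ¬ G.Reachable i j → A i j = 0}
  mul_mem' {A B} hA hB i j hij := by
    refine Finset.sum_eq_zero fun k _ => ?_
    change A i k * B k j = 0
    by_cases hik : G.Reachable i k
    · rw [hB k j fun hkj => hij (hik.trans hkj), mul_zero]
    · rw [hA i k hik, zero_mul]
  add_mem' hA hB i j hij := by simp [hA i j hij, hB i j hij]
  algebraMap_mem' c i j hij := by
    have hne : i ≠ j := fun h => hij (h ▸ Reachable.refl i)
    simp [algebraMap_matrix_apply, hne]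
  star_mem' hA i j hij := by simp [hA j i fun h => hij h.symm]

variable {R} {G : SimpleGraph ι}

theorem single_one_mem_reachableSupported_iff [Nontrivial R] {i j : ι} :
    single i j (1 : R) ∈ G.reachableSupported R ↔ G.Reachable i j := by
  refine ⟨fun h => by_contra fun hij => ?_, fun hij k l hkl => ?_⟩
  · simpa using h i j hij
  · refine single_apply_of_ne i j (1 : R) k l ?_
    rintro ⟨rfl, rfl⟩
    exact hkl hij

theorem reachableSupported_eq_top_iff [Nontrivial R] :
    G.reachableSupported R = ⊤ ↔ G.Preconnected := by
  refine ⟨fun h i j => ?_, fun h => eq_top_iff.mpr fun A _ i j hij => (hij (h i j)).elim⟩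
  exact single_one_mem_reachableSupported_iff.mp (h ▸ StarSubalgebra.mem_top)

theorem reachableSupported_le {S : StarSubalgebra R (Matrix ι ι R)}
    (hS : ∀ i j, G.Reachable i j → single i j (1 : R) ∈ S) : G.reachableSupported R ≤ S := by
  intro A hA
  rw [matrix_eq_sum_single A]
  refine sum_mem fun i _ => sum_mem fun j _ => ?_
  by_cases hij : G.Reachable i j
  · simpa using S.smul_mem (hS i j hij) (A i j)
  · simp [hA i j hij]

theorem single_one_mem_of_reachable {S : StarSubalgebra R (Matrix ι ι R)}
    (hdiag : ∀ i, single i i (1 : R) ∈ S) (hadj : ∀ i j, G.Adj i j → single i j (1 : R) ∈ S)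
    {i j : ι} (h : G.Reachable i j) : single i j (1 : R) ∈ S := by
  obtain ⟨p⟩ := h
  induction p with
  | nil => exact hdiag _
  | cons huv _ ih => simpa using mul_mem (hadj _ _ huv) ih

end SimpleGraph

section EdgeUnits

open SimpleGraph

variable {n : ℕ} {G : SimpleGraph (Fin n)}

theorem single_one_mem_adjoin_union_edgeUnits_of_adj {S : Set (Matrix (Fin n) (Fin n) ℂ)}
    {i j : Fin n} (h : G.Adj i j) :
    single i j (1 : ℂ) ∈ StarAlgebra.adjoin ℂ (S ∪ edgeUnits G) := by
  rcases lt_or_gt_of_ne h.ne with hij | hji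
  · exact StarAlgebra.subset_adjoin ℂ _ (Or.inr ⟨i, j, hij, h, rfl⟩)
  · have hunit : single j i (1 : ℂ) ∈ StarAlgebra.adjoin ℂ (S ∪ edgeUnits G) :=
      StarAlgebra.subset_adjoin ℂ _ (Or.inr ⟨j, i, hji, h.symm, rfl⟩)
    simpa [star_eq_conjTranspose] using star_mem hunit

theorem adjoin_isDiag_union_edgeUnits :
    StarAlgebra.adjoin ℂ ({d | d.IsDiag} ∪ edgeUnits G) = G.reachableSupported ℂ := by
  refine le_antisymm (StarAlgebra.adjoin_le ?_) (reachableSupported_le fun _ _ =>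
    single_one_mem_of_reachable (fun i => ?_) fun _ _ => single_one_mem_adjoin_union_edgeUnits_of_adj)
  · rintro u (hu | ⟨i, j, -, hij, rfl⟩) k l hkl
    · exact hu fun h => hkl (h ▸ Reachable.refl k)
    · exact single_one_mem_reachableSupported_iff.mpr hij.reachable k l hkl
  · refine StarAlgebra.subset_adjoin ℂ _ (Or.inl ?_)
    rw [← diagonal_single]
    exact isDiag_diagonal _

end EdgeUnits

/-- For `n ≥ 1` and a simple graph `G` on `Fin n`, the star-subalgebra of `Mₙ(ℂ)` generated
by the diagonal matrices together with the edge matrix units `U_G` is all of `Mₙ(ℂ)`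
(i.e. `U_G` is a graphing) if and only if `G` is connected. -/
theorem edgeUnits_graphing_iff_connected {n : ℕ} (hn : 1 ≤ n) (G : SimpleGraph (Fin n)) :
    IsGraphing (edgeUnits G) ↔ G.Connected := by
  have : Nonempty (Fin n) := ⟨⟨0, hn⟩⟩
  rw [IsGraphing, adjoin_isDiag_union_edgeUnits, SimpleGraph.reachableSupported_eq_top_iff,
    SimpleGraph.connected_iff, and_iff_left this]
end

section
/- Let n ∈ ℕ and let G be a simple graph on the vertex set Fin n. The evaluation of every formally reduced word in the edge matrix units U_G has all diagonal entries equal to 0 (the treeing condition) if and only if the graph G is acyclic. -/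
open Matrix

/-! A dart `(a, b)` of `G` is recorded by the letter of `U_G` that evaluates to `E_{ab}`. Since
`E_{ab} E_{cd} = 0` unless `b = c`, a word in `U_G` with nonzero `(i, j)`-entry is exactly the
word of a walk from `i` to `j`, and it then evaluates to `E_{ij}`. Two consecutive letters cancel
formally exactly when the walk runs back along the edge it just used, so reduced words with a
nonzero diagonal entry are nonempty closed walks without backtracking. A cycle is such a walk;
conversely, in an acyclic graph a walk without backtracking is a path
(`SimpleGraph.IsAcyclic.isPath_iff_isChain`), and a closed path is empty. -/

theorem List.IsChain.iff_of_isChain {α : Type*} {R S T : α → α → Prop} {l : List α}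
    (hT : l.IsChain T) (H : ∀ a b, T a b → (R a b ↔ S a b)) : l.IsChain R ↔ l.IsChain S := by
  rw [List.isChain_iff_getElem] at hT
  simp only [List.isChain_iff_getElem]
  exact forall₂_congr fun i hi => H _ _ (hT i hi)

theorem Matrix.eq_of_single_eq_single {m n α : Type*} [DecidableEq m] [DecidableEq n]
    [Zero α] {a c : m} {b d : n} {x y : α} (hx : x ≠ 0) (h : single a b x = single c d y) :
    a = c ∧ b = d := by
  by_contra hne
  have := congrFun₂ h a b
  simp only [single_apply_same, single_apply, eq_comm (a := c), eq_comm (a := d), hne,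
    if_false] at this
  exact hx this

namespace SimpleGraph

variable {n : ℕ} {G : SimpleGraph (Fin n)}

/-- The letter `E_{ab}` or `E_{ba}ᴴ` of `U_G` evaluating to `E_{ab}`, for a dart `(a, b)`. -/
noncomputable def dartLetter (G : SimpleGraph (Fin n)) (d : G.Dart) :
    Matrix (Fin n) (Fin n) ℂ × Bool :=
  if d.fst < d.snd then (single d.fst d.snd 1, true) else (single d.snd d.fst 1, false)

theorem dartLetter_mem_edgeUnits (d : G.Dart) : (G.dartLetter d).1 ∈ edgeUnits G := by
  unfold dartLetter
  split_ifs with h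
  · exact ⟨_, _, h, d.adj, rfl⟩
  · exact ⟨_, _, lt_of_le_of_ne (not_lt.mp h) d.adj.ne', d.adj.symm, rfl⟩

theorem dartLetter_symm (d : G.Dart) :
    G.dartLetter d.symm = ((G.dartLetter d).1, !(G.dartLetter d).2) := by
  obtain ⟨⟨a, b⟩, hab⟩ := d
  unfold dartLetter
  dsimp only
  rcases hab.ne.lt_or_gt with h | h <;> simp [h, h.not_gt]

theorem edge_eq_of_dartLetter_fst_eq {d d' : G.Dart}
    (h : (G.dartLetter d).1 = (G.dartLetter d').1) : d.edge = d'.edge := by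
  revert h
  obtain ⟨⟨a, b⟩, -⟩ := d
  obtain ⟨⟨c, e⟩, -⟩ := d'
  intro h
  unfold dartLetter at h
  split_ifs at h with h₁ h₂ h₂ <;>
  · obtain ⟨rfl, rfl⟩ := Matrix.eq_of_single_eq_single one_ne_zero h
    simp [Sym2.eq_swap]

theorem dartLetter_cancels_iff {d d' : G.Dart} (h : G.DartAdj d d') :
    ((G.dartLetter d').1 = (G.dartLetter d).1 ∧ (G.dartLetter d').2 ≠ (G.dartLetter d).2) ↔
      d.edge = d'.edge := by
  refine ⟨fun hc => (edge_eq_of_dartLetter_fst_eq hc.1).symm, fun he => ?_⟩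
  obtain rfl | rfl := (dart_edge_eq_iff d d').1 he
  · exact absurd h d.snd_ne_fst
  · simp [dartLetter_symm]

theorem wordEval_dartLetter_cons (d : G.Dart) (w : List (Matrix (Fin n) (Fin n) ℂ × Bool)) :
    wordEval (G.dartLetter d :: w) = single d.fst d.snd 1 * wordEval w := by
  unfold dartLetter
  split_ifs <;> simp [wordEval]

theorem exists_dartLetter_eq {p : Matrix (Fin n) (Fin n) ℂ × Bool} (hp : p.1 ∈ edgeUnits G) :
    ∃ d : G.Dart, G.dartLetter d = p := by
  obtain ⟨u, b⟩ := p
  obtain ⟨i, j, hij, hadj, rfl⟩ := hp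
  cases b
  · exact ⟨⟨(j, i), hadj.symm⟩, by simp [dartLetter, hij.not_gt]⟩
  · exact ⟨⟨(i, j), hadj⟩, by simp [dartLetter, hij]⟩

theorem exists_walk_of_wordEval_apply_ne_zero {w : List (Matrix (Fin n) (Fin n) ℂ × Bool)}
    (hw : ∀ p ∈ w, p.1 ∈ edgeUnits G) {i j : Fin n} (h : wordEval w i j ≠ 0) :
    ∃ W : G.Walk i j, W.darts.map G.dartLetter = w := by
  induction w generalizing i with
  | nil =>
    obtain rfl : i = j := by
      by_contra hij
      simp [wordEval, one_apply_ne hij] at h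
    exact ⟨.nil, rfl⟩
  | cons p w ih =>
    obtain ⟨d, rfl⟩ := exists_dartLetter_eq (hw p List.mem_cons_self)
    rw [wordEval_dartLetter_cons] at h
    obtain rfl : i = d.fst := by
      by_contra hi
      exact h (single_mul_apply_of_ne (c := 1) _ _ _ _ hi _)
    rw [single_mul_apply_same, one_mul] at h
    obtain ⟨W, hW⟩ := ih (fun q hq => hw q (List.mem_cons_of_mem _ hq)) h
    exact ⟨.cons d.adj W, by simp [hW]⟩

namespace Walk

theorem wordEval_map_dartLetter_apply {u v : Fin n} (W : G.Walk u v) :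
    wordEval (W.darts.map G.dartLetter) u v = 1 := by
  induction W with
  | nil => simp [wordEval]
  | cons h p ih =>
    rw [darts_cons, List.map_cons, wordEval_dartLetter_cons]
    simpa [single_mul_apply_same] using ih

theorem isChain_map_dartLetter_iff {u v : Fin n} (W : G.Walk u v) :
    (W.darts.map G.dartLetter).IsChain (fun a b => ¬(b.1 = a.1 ∧ b.2 ≠ a.2)) ↔
      W.edges.IsChain (· ≠ ·) := by
  rw [List.isChain_map, edges, List.isChain_map]
  exact W.isChain_dartAdj_darts.iff_of_isChain fun d d' h => not_congr (dartLetter_cancels_iff h)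

theorem isReducedWord_map_dartLetter_iff {u v : Fin n} (W : G.Walk u v) :
    IsReducedWord (edgeUnits G) (W.darts.map G.dartLetter) ↔
      ¬W.Nil ∧ W.edges.IsChain (· ≠ ·) := by
  simp only [IsReducedWord, ne_eq, List.map_eq_nil_iff, darts_eq_nil, List.forall_mem_map,
    dartLetter_mem_edgeUnits, implies_true, true_and]
  exact and_congr_right fun _ => isChain_map_dartLetter_iff W

end Walk

end SimpleGraph

/-- For a simple graph `G` on `Fin n`, the evaluation of every formally reduced word in the
edge matrix units `U_G` has all diagonal entries `0` (the treeing condition) if and only if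
`G` is acyclic. -/
theorem edgeUnits_treeing_iff_acyclic {n : ℕ} (G : SimpleGraph (Fin n)) :
    IsTreeing (edgeUnits G) ↔ G.IsAcyclic := by
  constructor
  · intro hT v c hc
    have hred := c.isReducedWord_map_dartLetter_iff.2 ⟨hc.not_nil, hc.edges_nodup.isChain⟩
    simpa [c.wordEval_map_dartLetter_apply] using hT _ hred v
  · intro hG w hw i
    by_contra h
    obtain ⟨W, rfl⟩ := SimpleGraph.exists_walk_of_wordEval_apply_ne_zero hw.2.1 h
    obtain ⟨hnil, hchain⟩ := W.isReducedWord_map_dartLetter_iff.1 hw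
    exact hnil (((hG.isPath_iff_isChain W).2 hchain).nil_iff_eq.2 rfl)
end

section
/- Let u ∈ Mₙ(ℂ) be a diagonal-normalizing partial isometry that is not itself a diagonal matrix. Then there exists an index i ∈ Fin n such that the (i,i) entry of uᴴ·u equals 1 and E_{ii}·(u·E_{ii}·uᴴ) = 0, where E_{ii} is the rank-one diagonal projection with (i,i) entry 1 and all other entries 0. -/
/-!
Pick an off-diagonal entry `u k j ≠ 0`. Since `u E_{jj} uᴴ` and `uᴴ E_{kk} u` are diagonal,
`u k j` is the only nonzero entry in its column and in its row. Reading `u uᴴ u = u` at `(k, j)`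
then gives `u k j * (uᴴ u) j j = u k j`, so `(uᴴ u) j j = 1`; and
`E_{jj} u E_{jj} = u j j • E_{jj} = 0` because `j ≠ k`.
-/

open Matrix

namespace Matrix

variable {l m n o R : Type*}

theorem isDiag_single [DecidableEq n] [Zero R] (i : n) (c : R) : (single i i c).IsDiag :=
  diagonal_single i c ▸ isDiag_diagonal _

variable [Fintype m] [Fintype n]

theorem mul_apply_eq_of_row_eq_zero [NonUnitalNonAssocSemiring R] {A : Matrix l m R}
    {B : Matrix m o R} {k : l} {j : m} (hrow : ∀ b ≠ j, A k b = 0) (i : o) :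
    (A * B) k i = A k j * B j i :=
  Finset.sum_eq_single j (fun b _ hb => by simp [hrow b hb]) (by simp)

theorem mul_single_mul_apply [DecidableEq m] [DecidableEq n] [NonUnitalNonAssocSemiring R]
    (A : Matrix l m R) (B : Matrix n o R) (i : m) (j : n) (c : R) (a : l) (b : o) :
    (A * single i j c * B) a b = A a i * c * B j b := by
  rw [mul_apply_eq_of_row_eq_zero (fun x hx => mul_single_apply_of_ne _ _ _ _ _ hx _),
    mul_single_apply_same]

section StarRing

variable [Ring R] [StarRing R] [NoZeroDivisors R] {u : Matrix n n R} {k j : n}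

theorem col_eq_zero_of_isDiag_mul_single_mul_conjTranspose [DecidableEq n]
    (h : (u * single j j 1 * uᴴ).IsDiag) (hkj : u k j ≠ 0) {a : n} (ha : a ≠ k) :
    u a j = 0 := by
  have : (u * single j j (1 : R) * uᴴ) a k = 0 := h ha
  rw [mul_single_mul_apply, mul_one, conjTranspose_apply] at this
  exact (mul_eq_zero.mp this).resolve_right (star_ne_zero.mpr hkj)

theorem row_eq_zero_of_isDiag_conjTranspose_mul_single_mul [DecidableEq n]
    (h : (uᴴ * single k k 1 * u).IsDiag) (hkj : u k j ≠ 0) {b : n} (hb : b ≠ j) :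
    u k b = 0 := by
  have h' : (uᴴ * single k k 1 * uᴴᴴ).IsDiag := by rwa [conjTranspose_conjTranspose]
  have := col_eq_zero_of_isDiag_mul_single_mul_conjTranspose h'
    (by rwa [conjTranspose_apply, star_ne_zero]) hb
  rwa [conjTranspose_apply, star_eq_zero] at this

theorem conjTranspose_mul_self_apply_eq_one_of_row_eq_zero (hpi : u * uᴴ * u = u)
    (hrow : ∀ b ≠ j, u k b = 0) (hkj : u k j ≠ 0) :
    (uᴴ * u) j j = 1 := by
  have : u k j * (uᴴ * u) j j = u k j := by
    rw [← mul_apply_eq_of_row_eq_zero hrow, ← Matrix.mul_assoc, hpi]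
  exact (mul_eq_left₀ hkj).mp this

end StarRing

end Matrix

/-- If `u ∈ Mₙ(ℂ)` is a diagonal-normalizing partial isometry which is not itself diagonal,
then there is an index `i` with `(uᴴ u) i i = 1` and `E_{ii} · (u · E_{ii} · uᴴ) = 0`. -/
theorem exists_orthogonal_diag_projection {n : ℕ} (u : Matrix (Fin n) (Fin n) ℂ)
    (hu : IsDNPI u) (hd : ¬ u.IsDiag) :
    ∃ i : Fin n, (uᴴ * u) i i = 1 ∧
      Matrix.single i i (1 : ℂ) * (u * Matrix.single i i (1 : ℂ) * uᴴ) = 0 := by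
  obtain ⟨hpi, hnorm⟩ := hu
  obtain ⟨k, j, hkj, hukj⟩ : ∃ k j, k ≠ j ∧ u k j ≠ 0 := by
    simpa [Matrix.IsDiag, Pairwise] using hd
  have hcol : ∀ a ≠ k, u a j = 0 := fun a ha =>
    col_eq_zero_of_isDiag_mul_single_mul_conjTranspose (hnorm _ (isDiag_single j 1)).1 hukj ha
  have hrow : ∀ b ≠ j, u k b = 0 := fun b hb =>
    row_eq_zero_of_isDiag_conjTranspose_mul_single_mul (hnorm _ (isDiag_single k 1)).2 hukj hb
  refine ⟨j, conjTranspose_mul_self_apply_eq_one_of_row_eq_zero hpi hrow hukj, ?_⟩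
  rw [← Matrix.mul_assoc, ← Matrix.mul_assoc, single_mul_mul_single, hcol j hkj.symm]
  simp
end

section
/- Let n ≥ 1 and let p ∈ Mₙ(ℂ) be a nonzero diagonal projection (a diagonal matrix with diagonal entries 0 or 1, not all 0). Then there exist finitely many diagonal-normalizing partial isometries v₁, …, v_m ∈ Mₙ(ℂ) such that ∑_{k=1}^m v_k·p·v_kᴴ equals the identity matrix. -/
open Matrix

lemma std_mul_mul {n : ℕ} (a b c e : Fin n) (d : Matrix (Fin n) (Fin n) ℂ) :
    single a b (1:ℂ) * d * single c e 1 = d b c • single a e 1 := by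
  ext i j
  by_cases hai : a = i <;> by_cases hej : e = j <;>
    simp [mul_apply, single, Finset.sum_ite_eq, hai, hej, eq_comm]

lemma std_conjT {n : ℕ} (a b : Fin n) :
    (single a b (1:ℂ))ᴴ = single b a 1 := by
  ext i j
  simp [single, conjTranspose_apply, and_comm]

lemma std_isDNPI {n : ℕ} (a b : Fin n) : IsDNPI (single a b (1:ℂ)) := by
  constructor
  · rw [std_conjT, std_mul_mul]
    simp
  · intro d hd
    rw [std_conjT, std_mul_mul, std_mul_mul]
    constructor <;> exact IsDiag.smul _ fun i j h => by
      simp [single]; aesop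

/-- If `p ∈ Mₙ(ℂ)` (`n ≥ 1`) is a nonzero diagonal projection, then there are finitely many
diagonal-normalizing partial isometries `v₁, …, v_m` with `∑ k, v_k · p · v_kᴴ = 1`. -/
theorem exists_dnpi_family_sum_eq_one {n : ℕ} (hn : 1 ≤ n) (p : Matrix (Fin n) (Fin n) ℂ)
    (hp : p.IsDiag) (hp' : ∀ i, p i i = 0 ∨ p i i = 1) (hne : p ≠ 0) :
    ∃ (m : ℕ) (v : Fin m → Matrix (Fin n) (Fin n) ℂ),
      (∀ k, IsDNPI (v k)) ∧ ∑ k, v k * p * (v k)ᴴ = 1 := by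
  -- find an index with p i i = 1
  have h1 : ∃ i : Fin n, p i i = 1 := by
    by_contra h
    push_neg at h
    apply hne
    ext i j
    rcases eq_or_ne i j with rfl | hij
    · rcases hp' i with h0 | h0
      · simpa using h0
      · exact absurd h0 (h i)
    · simpa using hp hij
  obtain ⟨i₀, hi₀⟩ := h1
  refine ⟨n, fun j => single j i₀ 1, fun j => std_isDNPI _ _, ?_⟩
  have : ∀ j : Fin n, single j i₀ (1:ℂ) * p * (single j i₀ (1:ℂ))ᴴ
      = single j j 1 := by
    intro j
    rw [std_conjT, std_mul_mul, hi₀, one_smul]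
  simp only [this]
  ext i j
  rcases eq_or_ne i j with rfl | hij
  · simp [Matrix.sum_apply, single, one_apply]
  · simp [Matrix.sum_apply, single, one_apply, hij]
end
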